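/- arXiv:math/0609474 — 2 statements merged into one kernel-verified Lean document; each statement's English description precedes it below -/
import Mathlib

section
/- For k ≥ 2 and γ > 1, the ball B(r) = {x : d(x,O) ≤ r} in Γ_{k,γ} satisfies lim_{r→∞} (log #B(r))/(log r) = (log(γk))/(log γ) = 1 + (log k)/(log γ). -/
open Classical

noncomputable section

/-- Length ⌊γ^j⌋ of the edges (segments) at generation `j` of the sparse tree. -/
def edgeLen (γ : ℝ) (j : ℕ) : ℕ := ⌊γ ^ j⌋₊

/-- The distance Σ_{j=1}^N ⌊γ^j⌋ from the root to the N-th generation of junctions. -/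
def junctionDist (γ : ℝ) (N : ℕ) : ℕ := ∑ j ∈ Finset.Icc 1 N, edgeLen γ j

/-- A vertex of the sparse tree Γ_{k,γ}: a list of branch choices made at the
junctions already passed, together with a position `t` along the current segment
(the root is `([], 0)`; a vertex with choices `w ≠ []` sits at position
`1 ≤ t ≤ ⌊γ^{|w|}⌋` along the segment of generation `|w|`, the segment's far end
`t = ⌊γ^{|w|}⌋` being the next junction). -/
def SparseVertex (k : ℕ) (γ : ℝ) : Type :=
  {p : List (Fin k) × ℕ //
    (p.1 = [] ∧ p.2 = 0) ∨ (p.1 ≠ [] ∧ 1 ≤ p.2 ∧ p.2 ≤ edgeLen γ p.1.length)}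

/-- The root `O` of Γ_{k,γ}. -/
def sparseRoot (k : ℕ) (γ : ℝ) : SparseVertex k γ := ⟨([], 0), Or.inl ⟨rfl, rfl⟩⟩

/-- A vertex is a junction iff it is the root or lies at the far end of its segment,
i.e. at distance Σ_{j=1}^N ⌊γ^j⌋ from the root for some N. Junctions have k forward
neighbours; all other vertices have one. -/
def isJunction {k : ℕ} {γ : ℝ} (v : SparseVertex k γ) : Prop :=
  (v.val.1 = [] ∧ v.val.2 = 0) ∨ (v.val.1 ≠ [] ∧ v.val.2 = edgeLen γ v.val.1.length)

/-- `u` is a forward neighbour of `v`. -/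
def forwardNbr {k : ℕ} {γ : ℝ} (v u : SparseVertex k γ) : Prop :=
  (¬ isJunction v ∧ u.val.1 = v.val.1 ∧ u.val.2 = v.val.2 + 1) ∨
  (isJunction v ∧ ∃ c : Fin k, u.val.1 = v.val.1 ++ [c] ∧ u.val.2 = 1)

/-- The sparse tree Γ_{k,γ} as a simple graph. -/
def sparseGraph (k : ℕ) (γ : ℝ) : SimpleGraph (SparseVertex k γ) :=
  SimpleGraph.fromRel (fun v u => forwardNbr v u)

/-- Graph distance from the root: |x| = d(x, O). -/
def distToRoot {k : ℕ} {γ : ℝ} (v : SparseVertex k γ) : ℕ :=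
  (sparseGraph k γ).dist (sparseRoot k γ) v

/-!
Every vertex other than the root has a forward predecessor, so the graph distance to the root
is the obvious depth: `junctionDist γ (|w| - 1) + t` for a vertex `t` steps into the segment of
generation `|w|`. Let `N = N(r)` be the last generation of junctions within distance `r`. The
ball `B(r)` contains all `k ^ N` segments of generation `N`, each of length `⌊γ ^ N⌋`, and is
contained in the segments of generation at most `N + 1`; hence `#B(r)` lies between constant
multiples of `(γ k) ^ N`, while `r` lies between constant multiples of `γ ^ N`. Thus
`log #B(r) = N log (γ k) + O(1)` and `log r = N log γ + O(1)`, and `N(r) → ∞`.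
-/

open Filter Asymptotics Topology

section LogAsymptotics

variable {ι : Type*} {l : Filter ι} {n : ι → ℕ}

theorem isBigO_log_sub_mul_log_of_pow_bounds {a : ι → ℝ} {y c C : ℝ} (hy : 0 < y) (hc : 0 < c)
    (ha : ∀ᶠ i in l, c * y ^ n i ≤ a i ∧ a i ≤ C * y ^ n i) :
    (fun i => Real.log (a i) - n i * Real.log y) =O[l] (fun _ => (1 : ℝ)) := by
  refine IsBigO.of_bound (max |Real.log c| |Real.log C|) ?_
  filter_upwards [ha] with i ⟨hlow, hup⟩
  have hpos : 0 < c * y ^ n i := by positivity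
  have hC : 0 < C := pos_of_mul_pos_left (hpos.trans_le (hlow.trans hup)) (by positivity)
  have log_mul_pow (b : ℝ) (hb : 0 < b) :
      Real.log (b * y ^ n i) = Real.log b + n i * Real.log y := by
    rw [Real.log_mul hb.ne' (by positivity), Real.log_pow]
  have hlow' := Real.log_le_log hpos hlow
  have hup' := Real.log_le_log (hpos.trans_le hlow) hup
  rw [log_mul_pow c hc] at hlow'
  rw [log_mul_pow C hC] at hup'
  rw [norm_one, mul_one, Real.norm_eq_abs]
  exact abs_le_max_abs_abs (by linarith) (by linarith)

theorem tendsto_div_natCast_of_isBigO_sub (hn : Tendsto n l atTop) {a : ι → ℝ} {L : ℝ}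
    (ha : (fun i => a i - n i * L) =O[l] (fun _ => (1 : ℝ))) :
    Tendsto (fun i => a i / n i) l (𝓝 L) := by
  have hn' : Tendsto (fun i => (n i : ℝ)) l atTop := tendsto_natCast_atTop_atTop.comp hn
  have hsmall : (fun i => a i - n i * L) =o[l] (fun i => (n i : ℝ)) :=
    ha.trans_isLittleO ((isLittleO_one_left_iff ℝ).2 (tendsto_norm_atTop_atTop.comp hn'))
  have hlim := hsmall.tendsto_div_nhds_zero.add_const L
  rw [zero_add] at hlim
  refine hlim.congr' ?_
  filter_upwards [hn'.eventually_gt_atTop 0] with i hi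
  field_simp
  ring

theorem tendsto_log_div_log_of_pow_bounds (hn : Tendsto n l atTop) {a b : ι → ℝ}
    {x y c C d D : ℝ} (hx : 1 < x) (hy : 0 < y) (hc : 0 < c) (hd : 0 < d)
    (ha : ∀ᶠ i in l, c * y ^ n i ≤ a i ∧ a i ≤ C * y ^ n i)
    (hb : ∀ᶠ i in l, d * x ^ n i ≤ b i ∧ b i ≤ D * x ^ n i) :
    Tendsto (fun i => Real.log (a i) / Real.log (b i)) l (𝓝 (Real.log y / Real.log x)) := by
  have hna := tendsto_div_natCast_of_isBigO_sub hn (isBigO_log_sub_mul_log_of_pow_bounds hy hc ha)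
  have hnb := tendsto_div_natCast_of_isBigO_sub hn
    (isBigO_log_sub_mul_log_of_pow_bounds (by linarith) hd hb)
  refine (hna.div hnb (Real.log_pos hx).ne').congr' ?_
  filter_upwards [(tendsto_natCast_atTop_atTop.comp hn).eventually_gt_atTop (0 : ℝ)] with i hi
  exact div_div_div_cancel_right₀ hi.ne' _ _

end LogAsymptotics

theorem SimpleGraph.dist_eq_of_adj_le_of_exists_adj {V : Type*} (G : SimpleGraph V) {o : V}
    {f : V → ℕ} (hfo : f o = 0) (hadj : ∀ ⦃u v⦄, G.Adj u v → f v ≤ f u + 1)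
    (hpred : ∀ v, v ≠ o → ∃ u, G.Adj u v ∧ f u + 1 = f v) (v : V) : G.dist o v = f v := by
  have le_add_length {u v : V} (w : G.Walk u v) : f v ≤ f u + w.length := by
    induction w with
    | nil => simp
    | cons h _ ih =>
      have := hadj h
      rw [SimpleGraph.Walk.length_cons]
      omega
  have exists_walk : ∀ m, ∀ v, f v = m → ∃ w : G.Walk o v, w.length = m := by
    intro m
    induction m using Nat.strong_induction_on with
    | _ m ih =>
      intro v hv
      by_cases hvo : v = o
      · subst hvo
        exact ⟨.nil, by simp [← hv, hfo]⟩
      obtain ⟨u, huv, hfu⟩ := hpred v hvo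
      obtain ⟨w, hw⟩ := ih (f u) (by omega) u rfl
      exact ⟨w.concat huv, by simp [hw, ← hv, hfu]⟩
  obtain ⟨w, hw⟩ := exists_walk (f v) v rfl
  obtain ⟨w', hw'⟩ := SimpleGraph.Reachable.exists_walk_length_eq_dist ⟨w⟩
  have := le_add_length w'
  have := hw ▸ SimpleGraph.dist_le w
  omega

theorem List.ncard_setOf_length_le_lt {α : Type*} [Finite α] (hα : 2 ≤ Nat.card α) (m : ℕ) :
    {l : List α | l.length ≤ m}.ncard < Nat.card α ^ (m + 1) := by
  let ofFn' : (Σ n : Fin (m + 1), Fin n → α) → List α := fun x => List.ofFn x.2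
  have hsub : {l : List α | l.length ≤ m} ⊆ Set.range ofFn' := fun l hl =>
    ⟨⟨⟨l.length, Nat.lt_succ_of_le hl⟩, l.get⟩, List.ofFn_get l⟩
  calc {l : List α | l.length ≤ m}.ncard
      ≤ Nat.card (Set.range ofFn') := Set.ncard_le_ncard hsub (Set.finite_range _)
    _ ≤ ∑ n ∈ Finset.range (m + 1), Nat.card α ^ n := by
        refine (Finite.card_range_le _).trans_eq ?_
        rw [Nat.card_sigma, ← Fin.sum_univ_eq_sum_range]
        simp only [Nat.card_fun, Nat.card_fin]
    _ < Nat.card α ^ (m + 1) := Nat.geomSum_lt hα (by simp)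

section SparseTree

variable {k : ℕ} {γ : ℝ}

lemma one_le_edgeLen (hγ : 1 < γ) (j : ℕ) : 1 ≤ edgeLen γ j :=
  Nat.le_floor (by exact_mod_cast one_le_pow₀ hγ.le)

lemma edgeLen_mono (hγ : 1 < γ) : Monotone (edgeLen γ) := fun _ _ hij =>
  Nat.floor_mono (pow_le_pow_right₀ hγ.le hij)

lemma edgeLen_le_pow (hγ : 1 < γ) (j : ℕ) : (edgeLen γ j : ℝ) ≤ γ ^ j :=
  Nat.floor_le (by positivity)

lemma pow_le_two_mul_edgeLen (hγ : 1 < γ) (j : ℕ) : γ ^ j ≤ 2 * edgeLen γ j := by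
  have h1 : (1 : ℝ) ≤ edgeLen γ j := by exact_mod_cast one_le_edgeLen hγ j
  have h2 : γ ^ j < edgeLen γ j + 1 := Nat.lt_floor_add_one _
  linarith

lemma junctionDist_zero : junctionDist γ 0 = 0 := by simp [junctionDist]

lemma junctionDist_succ (N : ℕ) :
    junctionDist γ (N + 1) = junctionDist γ N + edgeLen γ (N + 1) :=
  Finset.sum_Icc_succ_top (Nat.le_add_left 1 N) _

lemma junctionDist_mono : Monotone (junctionDist γ) := fun _ _ hMN =>
  Finset.sum_le_sum_of_subset (Finset.Icc_subset_Icc_right hMN)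

lemma le_junctionDist (hγ : 1 < γ) (N : ℕ) : N ≤ junctionDist γ N :=
  calc N = ∑ _j ∈ Finset.Icc 1 N, 1 := by simp
    _ ≤ junctionDist γ N := Finset.sum_le_sum fun j _ => one_le_edgeLen hγ j

lemma edgeLen_le_junctionDist {N : ℕ} (hN : 1 ≤ N) : edgeLen γ N ≤ junctionDist γ N :=
  Finset.single_le_sum (f := edgeLen γ) (fun _ _ => Nat.zero_le _) (Finset.mem_Icc.2 ⟨hN, le_rfl⟩)

lemma junctionDist_le_pow_div (hγ : 1 < γ) (N : ℕ) :
    (junctionDist γ N : ℝ) ≤ γ ^ (N + 1) / (γ - 1) := by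
  have hγ1 : 0 < γ - 1 := by linarith
  calc (junctionDist γ N : ℝ) ≤ ∑ j ∈ Finset.Icc 1 N, γ ^ j := by
        rw [junctionDist, Nat.cast_sum]
        exact Finset.sum_le_sum fun j _ => edgeLen_le_pow hγ j
    _ ≤ ∑ j ∈ Finset.range (N + 1), γ ^ j :=
        Finset.sum_le_sum_of_subset_of_nonneg (fun j hj => by simp at hj ⊢; omega)
          (fun _ _ _ => by positivity)
    _ = (γ ^ (N + 1) - 1) / (γ - 1) := geom_sum_eq (by linarith) _
    _ ≤ γ ^ (N + 1) / (γ - 1) := by gcongr; linarith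

-- Searching up to `r` suffices because `N ≤ junctionDist γ N`.
def junctionIndex (γ : ℝ) (r : ℕ) : ℕ := Nat.findGreatest (fun N => junctionDist γ N ≤ r) r

lemma junctionDist_junctionIndex_le (r : ℕ) : junctionDist γ (junctionIndex γ r) ≤ r :=
  Nat.findGreatest_spec (P := fun N => junctionDist γ N ≤ r) (Nat.zero_le r)
    (by simp [junctionDist_zero])

lemma lt_junctionDist_junctionIndex_succ (hγ : 1 < γ) (r : ℕ) :
    r < junctionDist γ (junctionIndex γ r + 1) := by
  by_cases h : junctionIndex γ r + 1 ≤ r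
  · exact not_le.1 (Nat.findGreatest_is_greatest (P := fun N => junctionDist γ N ≤ r)
      (Nat.lt_succ_self (junctionIndex γ r)) h)
  · have := le_junctionDist hγ (junctionIndex γ r + 1)
    omega

lemma tendsto_junctionIndex_atTop (hγ : 1 < γ) : Tendsto (junctionIndex γ) atTop atTop :=
  tendsto_atTop_atTop.2 fun N => ⟨junctionDist γ N, fun _ hr =>
    Nat.le_findGreatest ((le_junctionDist hγ N).trans hr) hr⟩

namespace SparseVertex

/-- At the root the truncated subtraction `0 - 1 = 0` gives depth `junctionDist γ 0 + 0 = 0`. -/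
def depth (v : SparseVertex k γ) : ℕ := junctionDist γ (v.val.1.length - 1) + v.val.2

lemma depth_sparseRoot : (sparseRoot k γ).depth = 0 := by
  simp [depth, sparseRoot, junctionDist_zero]

lemma depth_of_forwardNbr {u v : SparseVertex k γ} (h : forwardNbr v u) :
    u.depth = v.depth + 1 := by
  obtain ⟨-, hw, ht⟩ | ⟨⟨hw, ht⟩ | ⟨hw, ht⟩, c, hwu, htu⟩ := h
  · simp only [depth, hw, ht]
    ring
  · simp [depth, hwu, htu, hw, ht, junctionDist_zero]
  · obtain ⟨n, hn⟩ := Nat.exists_eq_add_of_lt (List.length_pos_iff.2 hw)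
    simp only [depth, hwu, htu, ht, List.length_append, List.length_singleton, hn,
      Nat.add_sub_cancel, junctionDist_succ]

lemma exists_forwardNbr_of_ne_sparseRoot (hγ : 1 < γ) {v : SparseVertex k γ}
    (hv : v ≠ sparseRoot k γ) : ∃ u, forwardNbr u v := by
  obtain ⟨⟨w, t⟩, ⟨hw, ht⟩ | ⟨hw, ht1, htE⟩⟩ := v
  · exact absurd (Subtype.ext (Prod.ext hw ht)) hv
  dsimp only at hw ht1 htE
  obtain ht | rfl := Nat.lt_or_eq_of_le ht1
  · refine ⟨⟨(w, t - 1), Or.inr ⟨hw, by omega, by dsimp only; omega⟩⟩,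
      Or.inl ⟨?_, rfl, (Nat.sub_add_cancel ht1).symm⟩⟩
    rintro (⟨hw', -⟩ | ⟨-, ht'⟩)
    exacts [hw hw', by dsimp only at ht'; omega]
  obtain rfl | ⟨w', c, rfl⟩ := w.eq_nil_or_concat'
  · exact absurd rfl hw
  by_cases hw' : w' = []
  · subst hw'
    exact ⟨sparseRoot k γ, Or.inr ⟨Or.inl ⟨rfl, rfl⟩, c, rfl, rfl⟩⟩
  · exact ⟨⟨(w', edgeLen γ w'.length), Or.inr ⟨hw', one_le_edgeLen hγ _, le_rfl⟩⟩,
      Or.inr ⟨Or.inr ⟨hw', rfl⟩, c, rfl, rfl⟩⟩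

lemma val_mem_of_depth_lt (hγ : 1 < γ) {N : ℕ} {v : SparseVertex k γ}
    (hv : v.depth < junctionDist γ (N + 1)) :
    v.val ∈ {w : List (Fin k) | w.length ≤ N + 1} ×ˢ Set.Iic (edgeLen γ (N + 1)) := by
  obtain ⟨⟨w, t⟩, ⟨hw, ht⟩ | ⟨_, _, htE⟩⟩ := v
  · dsimp only at hw ht
    simp [hw, ht]
  have hlen : w.length ≤ N + 1 := by
    by_contra! hlen
    have := junctionDist_mono (γ := γ) (Nat.le_sub_one_of_lt hlen)
    simp only [depth] at hv
    omega
  exact ⟨hlen, htE.trans (edgeLen_mono hγ hlen)⟩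

lemma finite_setOf_depth_le (hγ : 1 < γ) (r : ℕ) :
    {v : SparseVertex k γ | v.depth ≤ r}.Finite := by
  refine (((List.finite_length_le _ (r + 1)).prod (Set.finite_Iic _)).preimage
    Subtype.val_injective.injOn).subset fun v hv => val_mem_of_depth_lt hγ ?_
  exact (Nat.lt_succ_of_le hv).trans_le (le_junctionDist hγ (r + 1))

lemma ncard_setOf_depth_le_lt (hγ : 1 < γ) (hk : 2 ≤ k) {N r : ℕ}
    (hr : r < junctionDist γ (N + 1)) :
    {v : SparseVertex k γ | v.depth ≤ r}.ncard < k ^ (N + 2) * (edgeLen γ (N + 1) + 1) := by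
  have hsub : Subtype.val '' {v : SparseVertex k γ | v.depth ≤ r} ⊆
      {w : List (Fin k) | w.length ≤ N + 1} ×ˢ Set.Iic (edgeLen γ (N + 1)) := by
    rintro _ ⟨v, hv, rfl⟩
    exact val_mem_of_depth_lt hγ ((Nat.lt_succ_of_le hv).trans_le hr)
  calc {v : SparseVertex k γ | v.depth ≤ r}.ncard
      = (Subtype.val '' {v : SparseVertex k γ | v.depth ≤ r}).ncard :=
        (Set.ncard_image_of_injective _ Subtype.val_injective).symm
    _ ≤ {w : List (Fin k) | w.length ≤ N + 1}.ncard * (Set.Iic (edgeLen γ (N + 1))).ncard := by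
        rw [← Set.ncard_prod]
        exact Set.ncard_le_ncard hsub ((List.finite_length_le _ _).prod (Set.finite_Iic _))
    _ < k ^ (N + 2) * (edgeLen γ (N + 1) + 1) := by
        have hlists := List.ncard_setOf_length_le_lt (α := Fin k) (by simpa using hk) (N + 1)
        rw [Nat.card_fin] at hlists
        rw [← Finset.coe_Iic, Set.ncard_coe_finset, Nat.card_Iic]
        exact Nat.mul_lt_mul_of_pos_right hlists (Nat.succ_pos _)

lemma pow_mul_edgeLen_le_ncard_setOf_depth_le (hγ : 1 < γ) {N r : ℕ} (hN : 1 ≤ N)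
    (hNr : junctionDist γ N ≤ r) :
    k ^ N * edgeLen γ N ≤ {v : SparseVertex k γ | v.depth ≤ r}.ncard := by
  let φ : (Fin N → Fin k) × Fin (edgeLen γ N) → SparseVertex k γ := fun x =>
    ⟨(List.ofFn x.1, x.2 + 1), Or.inr ⟨by simp; omega, by omega, by simp⟩⟩
  have hφ : Function.Injective φ := by
    rintro ⟨f, s⟩ ⟨g, t⟩ h
    have h := congrArg Subtype.val h
    simp only [φ, Prod.mk.injEq, List.ofFn_inj] at h
    rw [h.1, Fin.ext (Nat.succ_injective h.2)]
  have hrange : Set.range φ ⊆ {v | v.depth ≤ r} := by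
    rintro _ ⟨⟨f, s⟩, rfl⟩
    have hE := junctionDist_succ (γ := γ) (N - 1)
    rw [Nat.sub_add_cancel hN] at hE
    show junctionDist γ ((List.ofFn f).length - 1) + (s + 1) ≤ r
    rw [List.length_ofFn]
    omega
  calc k ^ N * edgeLen γ N = Nat.card ((Fin N → Fin k) × Fin (edgeLen γ N)) := by simp
    _ = (Set.range φ).ncard := by rw [← Set.image_univ, Set.ncard_image_of_injective _ hφ]; simp
    _ ≤ _ := Set.ncard_le_ncard hrange (finite_setOf_depth_le hγ r)

end SparseVertex

theorem distToRoot_eq_depth (hγ : 1 < γ) (v : SparseVertex k γ) : distToRoot v = v.depth := by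
  refine SimpleGraph.dist_eq_of_adj_le_of_exists_adj _ SparseVertex.depth_sparseRoot
    (fun u v huv => ?_) (fun v hv => ?_) v
  · rw [sparseGraph, SimpleGraph.fromRel_adj] at huv
    rcases huv.2 with h | h <;> have := SparseVertex.depth_of_forwardNbr h <;> omega
  · obtain ⟨u, hu⟩ := SparseVertex.exists_forwardNbr_of_ne_sparseRoot hγ hv
    have hdepth := SparseVertex.depth_of_forwardNbr hu
    refine ⟨u, (SimpleGraph.fromRel_adj _ _ _).2 ⟨fun huv => ?_, Or.inl hu⟩, hdepth.symm⟩
    subst huv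
    omega

lemma eventually_ncard_setOf_depth_le_pow_bounds (hk : 2 ≤ k) (hγ : 1 < γ) :
    ∀ᶠ r : ℕ in atTop,
      2⁻¹ * (γ * k) ^ junctionIndex γ r ≤ ({v : SparseVertex k γ | v.depth ≤ r}.ncard : ℝ) ∧
      ({v : SparseVertex k γ | v.depth ≤ r}.ncard : ℝ) ≤
        2 * k ^ 2 * γ * (γ * k) ^ junctionIndex γ r := by
  filter_upwards [(tendsto_junctionIndex_atTop hγ).eventually_ge_atTop 1] with r hN
  set N := junctionIndex γ r
  have hlow : ((k ^ N * edgeLen γ N : ℕ) : ℝ) ≤ {v : SparseVertex k γ | v.depth ≤ r}.ncard :=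
    Nat.cast_le.2 (SparseVertex.pow_mul_edgeLen_le_ncard_setOf_depth_le hγ hN
      (junctionDist_junctionIndex_le r))
  have hup : ({v : SparseVertex k γ | v.depth ≤ r}.ncard : ℝ) ≤
      ((k ^ (N + 2) * (edgeLen γ (N + 1) + 1) : ℕ) : ℝ) :=
    Nat.cast_le.2 (SparseVertex.ncard_setOf_depth_le_lt hγ hk
      (lt_junctionDist_junctionIndex_succ hγ r)).le
  push_cast at hlow hup
  have hE := pow_le_two_mul_edgeLen hγ N
  have hE' := edgeLen_le_pow hγ (N + 1)
  have hγN : 1 ≤ γ ^ (N + 1) := one_le_pow₀ hγ.le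
  constructor
  · calc 2⁻¹ * (γ * k) ^ N = k ^ N * (2⁻¹ * γ ^ N) := by ring
      _ ≤ k ^ N * edgeLen γ N := by gcongr; linarith
      _ ≤ _ := hlow
  · calc _ ≤ (k : ℝ) ^ (N + 2) * (edgeLen γ (N + 1) + 1) := hup
      _ ≤ k ^ (N + 2) * (2 * γ ^ (N + 1)) := by gcongr; linarith
      _ = 2 * k ^ 2 * γ * (γ * k) ^ N := by ring

lemma eventually_natCast_pow_bounds (hγ : 1 < γ) :
    ∀ᶠ r : ℕ in atTop,
      2⁻¹ * γ ^ junctionIndex γ r ≤ (r : ℝ) ∧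
      (r : ℝ) ≤ γ ^ 2 / (γ - 1) * γ ^ junctionIndex γ r := by
  filter_upwards [(tendsto_junctionIndex_atTop hγ).eventually_ge_atTop 1] with r hN
  set N := junctionIndex γ r
  have hlow : (edgeLen γ N : ℝ) ≤ r :=
    Nat.cast_le.2 ((edgeLen_le_junctionDist hN).trans (junctionDist_junctionIndex_le r))
  have hup : (r : ℝ) ≤ junctionDist γ (N + 1) :=
    Nat.cast_le.2 (lt_junctionDist_junctionIndex_succ hγ r).le
  have hE := pow_le_two_mul_edgeLen hγ N
  refine ⟨by linarith, hup.trans ((junctionDist_le_pow_div hγ (N + 1)).trans_eq ?_)⟩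
  ring

end SparseTree

/-- For k ≥ 2 and γ > 1, the ball B(r) = {x : d(x,O) ≤ r} in Γ_{k,γ}
satisfies lim_{r→∞} (log #B(r))/(log r) = log(γk)/log γ = 1 + (log k)/(log γ). -/
theorem sparse_tree_dimension (k : ℕ) (γ : ℝ) (hk : 2 ≤ k) (hγ : 1 < γ) :
    Filter.Tendsto
      (fun r : ℕ =>
        Real.log ({v : SparseVertex k γ | distToRoot v ≤ r}.ncard) / Real.log r)
      Filter.atTop (nhds (Real.log (γ * k) / Real.log γ)) ∧
    Real.log (γ * k) / Real.log γ = 1 + Real.log k / Real.log γ := by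
  have hk0 : (0 : ℝ) < k := by exact_mod_cast (by omega : 0 < k)
  refine ⟨?_, by rw [Real.log_mul (by positivity) hk0.ne', add_div,
    div_self (Real.log_pos hγ).ne']⟩
  simp_rw [distToRoot_eq_depth hγ]
  exact tendsto_log_div_log_of_pow_bounds (tendsto_junctionIndex_atTop hγ) hγ (by positivity)
    (by norm_num) (by norm_num) (eventually_ncard_setOf_depth_le_pow_bounds hk hγ)
    (eventually_natCast_pow_bounds hγ)
end
end

section
/- Let H be a bounded self-adjoint operator on ℓ²(V), Ω ⊆ V finite, and let H_Ω = H − T where T consists of the hopping terms ⟨δ_x, H δ_y⟩ for pairs (x,y) with exactly one of x, y in Ω. Then for z non-real and x, w ∈ V with x ∈ Ω and w ∉ Ω⁺⁺ (the 2-neighborhood of Ω), the matrix element of the resolvent expands as ⟨δ_x, (H−z)^{-1} δ_w⟩ = Σ_{(u,u') ∈ Θ(Ω)} Σ_{(y,y') ∈ Θ(Ω⁺⁺)} ⟨δ_x, (H_Ω−z)^{-1} δ_u⟩ ⟨δ_u, T δ_{u'}⟩ ⟨δ_{u'}, (H−z)^{-1} δ_y⟩ ⟨δ_y, T' δ_{y'}⟩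 ⟨δ_{y'}, (H_{Ω⁺⁺}−z)^{-1} δ_w⟩, where Θ(Ω) is the set of ordered boundary bonds (u,u') with u ∈ Ω, u' ∉ Ω, d(u,u') = 1, and T' = H − H_{Ω⁺⁺}. -/
noncomputable section
open scoped Classical

/-- The delta function at x ∈ V, an element of the standard orthonormal basis of ℓ²(V). -/
def deltaFn (V : Type*) [DecidableEq V] (x : V) : lp (fun _ : V => ℂ) 2 :=
  lp.single 2 x 1

/-!
Write `A = H - z`, `R₁ = (A - T)⁻¹` and `R₂ = (A - T')⁻¹`. The resolvent identities
`R = R₁ - R₁ T R` and `R = R₂ - R T' R₂`, the second substituted into the first, give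
`R = R₁ - R₁ T R₂ + R₁ T R T' R₂`. The operators `H - T` and `H - T'` are block diagonal for
the splittings `V = Ω ⊔ Ωᶜ` and `V = Ω⁺⁺ ⊔ (Ω⁺⁺)ᶜ`: they commute with the coordinate
projections onto `Ω` and `Ω⁺⁺`, hence so do `R₁` and `R₂`. So `⟨δ_x, R₁ δ_w⟩ = 0`, and in
`R₁ T R₂` every bond leaving `Ω` ends in `Ω⁺ = thicken G Ω ⊆ Ω⁺⁺`, from where `R₂` cannot reach
`w`. In the last term `T` and `T'` are finite sums of rank-one hopping terms, and the same
block structure of `R₁` and `R₂` discards every bond that is not oriented outwards.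
-/

open InnerProductSpace
open scoped lp

namespace DoubleResolvent

theorem resolvent_double_expansion {α : Type*} [Ring α] {A T T' R R₁ R₂ : α}
    (hR : A * R = 1) (hR' : R * A = 1) (hR₁ : R₁ * (A - T) = 1) (hR₂ : (A - T') * R₂ = 1) :
    R = R₁ - R₁ * T * R₂ + R₁ * T * (R * T' * R₂) := by
  have h₁ : R = R₁ - R₁ * T * R := by
    calc R = R₁ * (A - T) * R := by rw [hR₁, one_mul]
      _ = R₁ * (A * R) - R₁ * T * R := by noncomm_ring
      _ = R₁ - R₁ * T * R := by rw [hR, mul_one]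
  have h₂ : R = R₂ - R * T' * R₂ := by
    calc R = R * ((A - T') * R₂) := by rw [hR₂, mul_one]
      _ = R * A * R₂ - R * T' * R₂ := by noncomm_ring
      _ = R₂ - R * T' * R₂ := by rw [hR', one_mul]
  calc R = R₁ - R₁ * T * (R₂ - R * T' * R₂) := by rw [← h₂]; exact h₁
    _ = R₁ - R₁ * T * R₂ + R₁ * T * (R * T' * R₂) := by noncomm_ring

variable {V : Type*}

def thicken (G : SimpleGraph V) (s : Set V) : Set V := s ∪ ⋃ u ∈ s, G.neighborSet u

section Graph

variable {G : SimpleGraph V} {s : Set V}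

theorem finite_thicken (hdeg : ∀ v, (G.neighborSet v).Finite) (hs : s.Finite) :
    (thicken G s).Finite :=
  hs.union (hs.biUnion fun u _ => hdeg u)

theorem mem_thicken_of_adj {u v : V} (hu : u ∈ s) (huv : G.Adj u v) : v ∈ thicken G s :=
  Or.inr (Set.mem_biUnion hu huv)

theorem mem_iterate_thicken_of_walk {u v : V} (p : G.Walk u v) {n : ℕ} (hp : p.length ≤ n)
    (hu : u ∈ s) : v ∈ (thicken G)^[n] s := by
  induction p generalizing n s with
  | nil => exact Function.id_le_iterate_of_id_le (fun _ => Set.subset_union_left) n s hu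
  | cons huv q ih =>
    obtain _ | n := n
    · simp at hp
    · rw [Function.iterate_succ_apply]
      exact ih (by simpa using hp) (mem_thicken_of_adj hu huv)

theorem thicken_subset_setOf_walk {n : ℕ} (hn : 1 ≤ n) :
    thicken G s ⊆ {v | ∃ u ∈ s, ∃ p : G.Walk u v, p.length ≤ n} := by
  rintro v (hv | hv)
  · exact ⟨v, hv, .nil, Nat.zero_le n⟩
  · obtain ⟨u, hu, huv : G.Adj u v⟩ := Set.mem_iUnion₂.mp hv
    exact ⟨u, hu, huv.toWalk, by simpa using hn⟩

end Graph

variable [DecidableEq V]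

local notation "δ" => deltaFn V

theorem inner_deltaFn_left (i : V) (v : ℓ²(V, ℂ)) : (inner ℂ (δ i) v : ℂ) = v i := by
  simp [deltaFn, lp.inner_single_left]

theorem inner_deltaFn_deltaFn (i j : V) :
    (inner ℂ (δ i) (δ j) : ℂ) = if i = j then 1 else 0 := by
  rw [inner_deltaFn_left, deltaFn, lp.single_apply, Pi.single_apply]

theorem ext_inner_deltaFn {v w : ℓ²(V, ℂ)} (h : ∀ i, (inner ℂ (δ i) v : ℂ) = inner ℂ (δ i) w) :
    v = w :=
  lp.ext <| funext fun i => by simpa only [inner_deltaFn_left] using h i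

theorem clm_ext_inner_deltaFn {A B : ℓ²(V, ℂ) →L[ℂ] ℓ²(V, ℂ)}
    (h : ∀ i j, (inner ℂ (δ i) (A (δ j)) : ℂ) = inner ℂ (δ i) (B (δ j))) : A = B := by
  refine lp.ext_continuousLinearMap (by norm_num) fun j => ContinuousLinearMap.ext fun a => ?_
  have hsingle : lp.single 2 j a = a • δ j := by simp [deltaFn, ← lp.single_smul]
  simp only [ContinuousLinearMap.comp_apply, lp.singleContinuousLinearMap_apply, hsingle,
    map_smul, ext_inner_deltaFn (h · j)]

theorem eq_sum_rankOne (S : Finset (V × V)) (A : ℓ²(V, ℂ) →L[ℂ] ℓ²(V, ℂ))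
    (hA : ∀ p ∉ S, (inner ℂ (δ p.1) (A (δ p.2)) : ℂ) = 0) :
    A = ∑ p ∈ S, (inner ℂ (δ p.1) (A (δ p.2)) : ℂ) • rankOne ℂ (δ p.1) (δ p.2) := by
  refine clm_ext_inner_deltaFn fun i j => ?_
  have hterm (p : V × V) : (inner ℂ (δ i)
      (((inner ℂ (δ p.1) (A (δ p.2)) : ℂ) • rankOne ℂ (δ p.1) (δ p.2)) (δ j)) : ℂ) =
      if (i, j) = p then (inner ℂ (δ p.1) (A (δ p.2)) : ℂ) else 0 := by
    rcases p with ⟨k, l⟩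
    simp only [smul_apply, rankOne_apply, inner_smul_right, inner_deltaFn_deltaFn, Prod.mk.injEq]
    by_cases hik : i = k <;> by_cases hlj : l = j <;> simp_all [eq_comm]
  rw [sum_apply, inner_sum, Finset.sum_congr rfl fun p _ => hterm p, Finset.sum_ite_eq]
  split_ifs with h
  · rfl
  · exact hA (i, j) h

theorem inner_mul_mul_apply_eq_tsum (A T M : ℓ²(V, ℂ) →L[ℂ] ℓ²(V, ℂ))
    (hT : (Function.support fun p : V × V => (inner ℂ (δ p.1) (T (δ p.2)) : ℂ)).Finite)
    (x w : V) :
    (inner ℂ (δ x) ((A * T * M) (δ w)) : ℂ) = ∑' p : V × V,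
      (inner ℂ (δ x) (A (δ p.1)) : ℂ) * (inner ℂ (δ p.1) (T (δ p.2)) : ℂ) *
        (inner ℂ (δ p.2) (M (δ w)) : ℂ) := by
  have hS (p) (hp : p ∉ hT.toFinset) : (inner ℂ (δ p.1) (T (δ p.2)) : ℂ) = 0 := by
    simpa using hp
  rw [tsum_eq_sum (s := hT.toFinset) fun p hp => by rw [hS p hp, mul_zero, zero_mul]]
  conv_lhs => rw [eq_sum_rankOne _ T hS]
  simp only [mul_apply_eq_comp, sum_apply, smul_apply, rankOne_apply, map_sum, map_smul,
    inner_sum, inner_smul_right]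
  exact Finset.sum_congr rfl fun p _ => by ring

def coordProj (s : Finset V) : ℓ²(V, ℂ) →L[ℂ] ℓ²(V, ℂ) := ∑ u ∈ s, rankOne ℂ (δ u) (δ u)

theorem inner_deltaFn_coordProj (s : Finset V) (i : V) (v : ℓ²(V, ℂ)) :
    (inner ℂ (δ i) (coordProj s v) : ℂ) = if i ∈ s then (inner ℂ (δ i) v : ℂ) else 0 := by
  simp only [coordProj, sum_apply, rankOne_apply, inner_sum, inner_smul_right,
    inner_deltaFn_deltaFn, mul_ite, mul_one, mul_zero, Finset.sum_ite_eq]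

theorem coordProj_deltaFn (s : Finset V) (j : V) :
    coordProj s (δ j) = if j ∈ s then δ j else 0 :=
  ext_inner_deltaFn fun i => by
    rw [inner_deltaFn_coordProj]
    split_ifs <;> grind [inner_deltaFn_deltaFn, inner_zero_right]

theorem commute_coordProj {s : Finset V} {K : ℓ²(V, ℂ) →L[ℂ] ℓ²(V, ℂ)}
    (hK : ∀ i j, (i ∈ s ∧ j ∉ s) ∨ (i ∉ s ∧ j ∈ s) → (inner ℂ (δ i) (K (δ j)) : ℂ) = 0) :
    Commute (coordProj s) K :=
  clm_ext_inner_deltaFn fun i j => by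
    simp only [mul_apply_eq_comp, inner_deltaFn_coordProj, coordProj_deltaFn]
    split_ifs with hi hj hj
    · rfl
    · rw [map_zero, inner_zero_right, hK i j (Or.inl ⟨hi, hj⟩)]
    · exact (hK i j (Or.inr ⟨hi, hj⟩)).symm
    · rw [map_zero, inner_zero_right]

theorem inner_inverse_apply_eq_zero_of_block {s : Set V} (hs : s.Finite)
    {K Rk : ℓ²(V, ℂ) →L[ℂ] ℓ²(V, ℂ)}
    (hK : ∀ i j, (i ∈ s ∧ j ∉ s) ∨ (i ∉ s ∧ j ∈ s) → (inner ℂ (δ i) (K (δ j)) : ℂ) = 0)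
    (h₁ : K * Rk = 1) (h₂ : Rk * K = 1) {a b : V} (ha : a ∈ s) (hb : b ∉ s) :
    (inner ℂ (δ a) (Rk (δ b)) : ℂ) = 0 := by
  let P := coordProj hs.toFinset
  have hPK : Commute P K := commute_coordProj fun i j hij => hK i j (by simpa using hij)
  have hPRk : Commute P Rk := hPK.units_inv_right (u := ⟨K, Rk, h₁, h₂⟩)
  calc (inner ℂ (δ a) (Rk (δ b)) : ℂ) = inner ℂ (δ a) (P (Rk (δ b))) := by
        rw [inner_deltaFn_coordProj, if_pos (hs.mem_toFinset.mpr ha)]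
    _ = inner ℂ (δ a) (Rk (P (δ b))) :=
        congrArg (fun A : ℓ²(V, ℂ) →L[ℂ] ℓ²(V, ℂ) => inner ℂ (δ a) (A (δ b))) hPRk.eq
    _ = 0 := by rw [coordProj_deltaFn, if_neg (by simpa using hb), map_zero, inner_zero_right]

section Cut

variable {G : SimpleGraph V} {s : Set V} {H T : ℓ²(V, ℂ) →L[ℂ] ℓ²(V, ℂ)}

theorem cut_of_inner_ne_zero
    (hloc : ∀ x y : V, x ≠ y → ¬ G.Adj x y → (inner ℂ (δ x) (H (δ y)) : ℂ) = 0)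
    (hT : ∀ x y : V, (inner ℂ (δ x) (T (δ y)) : ℂ) =
      if (x ∈ s ∧ y ∉ s) ∨ (x ∉ s ∧ y ∈ s) then (inner ℂ (δ x) (H (δ y)) : ℂ) else 0)
    {x y : V} (h : (inner ℂ (δ x) (T (δ y)) : ℂ) ≠ 0) :
    ((x ∈ s ∧ y ∉ s) ∨ (x ∉ s ∧ y ∈ s)) ∧ G.Adj x y := by
  rw [hT x y] at h
  split_ifs at h with hxy
  · refine ⟨hxy, by_contra fun hadj => h (hloc x y ?_ hadj)⟩
    rintro rfl
    tauto
  · exact absurd rfl h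

theorem inner_sub_sub_smul_one_eq_zero
    (hT : ∀ x y : V, (inner ℂ (δ x) (T (δ y)) : ℂ) =
      if (x ∈ s ∧ y ∉ s) ∨ (x ∉ s ∧ y ∈ s) then (inner ℂ (δ x) (H (δ y)) : ℂ) else 0)
    (z : ℂ) {x y : V} (hxy : (x ∈ s ∧ y ∉ s) ∨ (x ∉ s ∧ y ∈ s)) :
    (inner ℂ (δ x) ((H - T - z • 1) (δ y)) : ℂ) = 0 := by
  have hne : x ≠ y := by
    rintro rfl
    tauto
  simp only [sub_apply, smul_apply, one_apply_eq_self, inner_sub_right, inner_smul_right, hT,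
    if_pos hxy, inner_deltaFn_deltaFn, if_neg hne]
  ring

theorem finite_support_of_cut (hdeg : ∀ v, (G.neighborSet v).Finite) (hs : s.Finite)
    (hT : ∀ x y : V, (inner ℂ (δ x) (T (δ y)) : ℂ) ≠ 0 →
      ((x ∈ s ∧ y ∉ s) ∨ (x ∉ s ∧ y ∈ s)) ∧ G.Adj x y) :
    (Function.support fun p : V × V => (inner ℂ (δ p.1) (T (δ p.2)) : ℂ)).Finite := by
  refine ((finite_thicken hdeg hs).prod (finite_thicken hdeg hs)).subset fun p hp => ?_
  obtain ⟨⟨hx, -⟩ | ⟨-, hy⟩, hadj⟩ := hT p.1 p.2 hp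
  · exact ⟨Or.inl hx, mem_thicken_of_adj hx hadj⟩
  · exact ⟨mem_thicken_of_adj hy hadj.symm, Or.inl hy⟩

end Cut

section Expansion

variable {T T' R R₁ R₂ : ℓ²(V, ℂ) →L[ℂ] ℓ²(V, ℂ)} {x w : V}

theorem inner_eq_tsum_tsum_of_expansion
    (hT : (Function.support fun p : V × V => (inner ℂ (δ p.1) (T (δ p.2)) : ℂ)).Finite)
    (hT' : (Function.support fun p : V × V => (inner ℂ (δ p.1) (T' (δ p.2)) : ℂ)).Finite)
    (hR : R = R₁ - R₁ * T * R₂ + R₁ * T * (R * T' * R₂))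
    (hdirect : (inner ℂ (δ x) (R₁ (δ w)) : ℂ) = 0)
    (hsingle : ∀ p : V × V, (inner ℂ (δ x) (R₁ (δ p.1)) : ℂ) *
      (inner ℂ (δ p.1) (T (δ p.2)) : ℂ) * (inner ℂ (δ p.2) (R₂ (δ w)) : ℂ) = 0) :
    (inner ℂ (δ x) (R (δ w)) : ℂ) = ∑' p : V × V, ∑' q : V × V,
      (inner ℂ (δ x) (R₁ (δ p.1)) : ℂ) * (inner ℂ (δ p.1) (T (δ p.2)) : ℂ) *
      (inner ℂ (δ p.2) (R (δ q.1)) : ℂ) * (inner ℂ (δ q.1) (T' (δ q.2)) : ℂ) *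
      (inner ℂ (δ q.2) (R₂ (δ w)) : ℂ) := by
  have h := congrArg (fun A : ℓ²(V, ℂ) →L[ℂ] ℓ²(V, ℂ) => (inner ℂ (δ x) (A (δ w)) : ℂ)) hR
  simp only [add_apply, sub_apply, inner_add_right, inner_sub_right] at h
  simp only [h, hdirect, inner_mul_mul_apply_eq_tsum _ _ _ hT,
    inner_mul_mul_apply_eq_tsum _ _ _ hT', hsingle, tsum_zero, sub_zero, zero_add, ← tsum_mul_left]
  exact tsum_congr fun p => tsum_congr fun q => by ring

theorem inner_eq_tsum_boundaryBonds {G : SimpleGraph V} {s t : Set V}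
    (hT : (Function.support fun p : V × V => (inner ℂ (δ p.1) (T (δ p.2)) : ℂ)).Finite)
    (hT' : (Function.support fun p : V × V => (inner ℂ (δ p.1) (T' (δ p.2)) : ℂ)).Finite)
    (hTcut : ∀ a b : V, (inner ℂ (δ a) (T (δ b)) : ℂ) ≠ 0 →
      ((a ∈ s ∧ b ∉ s) ∨ (a ∉ s ∧ b ∈ s)) ∧ G.Adj a b)
    (hT'cut : ∀ a b : V, (inner ℂ (δ a) (T' (δ b)) : ℂ) ≠ 0 →
      ((a ∈ t ∧ b ∉ t) ∨ (a ∉ t ∧ b ∈ t)) ∧ G.Adj a b)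
    (hR₁ : ∀ a b : V, a ∈ s → b ∉ s → (inner ℂ (δ a) (R₁ (δ b)) : ℂ) = 0)
    (hR₂ : ∀ a b : V, a ∈ t → b ∉ t → (inner ℂ (δ a) (R₂ (δ b)) : ℂ) = 0)
    (hR : R = R₁ - R₁ * T * R₂ + R₁ * T * (R * T' * R₂))
    (hst : thicken G s ⊆ t) (hx : x ∈ s) (hw : w ∉ t) :
    (inner ℂ (δ x) (R (δ w)) : ℂ) =
      ∑' b : {b : V × V // b.1 ∈ s ∧ b.2 ∉ s ∧ G.Adj b.1 b.2},
        ∑' b' : {b' : V × V // b'.1 ∈ t ∧ b'.2 ∉ t ∧ G.Adj b'.1 b'.2},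
          (inner ℂ (δ x) (R₁ (δ b.val.1)) : ℂ) * (inner ℂ (δ b.val.1) (T (δ b.val.2)) : ℂ) *
          (inner ℂ (δ b.val.2) (R (δ b'.val.1)) : ℂ) *
          (inner ℂ (δ b'.val.1) (T' (δ b'.val.2)) : ℂ) *
          (inner ℂ (δ b'.val.2) (R₂ (δ w)) : ℂ) := by
  have hsingle (p : V × V) : (inner ℂ (δ x) (R₁ (δ p.1)) : ℂ) *
      (inner ℂ (δ p.1) (T (δ p.2)) : ℂ) * (inner ℂ (δ p.2) (R₂ (δ w)) : ℂ) = 0 := by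
    by_cases hp : p.1 ∈ s
    · by_cases hTp : (inner ℂ (δ p.1) (T (δ p.2)) : ℂ) = 0
      · rw [hTp, mul_zero, zero_mul]
      · rw [hR₂ _ w (hst (mem_thicken_of_adj hp (hTcut _ _ hTp).2)) hw, mul_zero]
    · rw [hR₁ x _ hx hp, zero_mul, zero_mul]
  have hdirect := hR₁ x w hx fun h => hw (hst (Or.inl h))
  rw [inner_eq_tsum_tsum_of_expansion hT hT' hR hdirect hsingle,
    ← tsum_subtype_eq_of_support_subset (s := {b : V × V | b.1 ∈ s ∧ b.2 ∉ s ∧ G.Adj b.1 b.2})]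
  · refine tsum_congr fun b => (tsum_subtype_eq_of_support_subset ?_).symm
    refine Function.support_subset_iff'.mpr fun q hq => ?_
    by_cases hq₂ : q.2 ∈ t
    · rw [hR₂ _ w hq₂ hw, mul_zero]
    · by_cases hT'q : (inner ℂ (δ q.1) (T' (δ q.2)) : ℂ) = 0
      · rw [hT'q, mul_zero, zero_mul]
      · exact absurd (by have := hT'cut _ _ hT'q; tauto) hq
  · refine Function.support_subset_iff'.mpr fun p hp => (tsum_congr fun q => ?_).trans tsum_zero
    by_cases hp₁ : p.1 ∈ s
    · by_cases hTp : (inner ℂ (δ p.1) (T (δ p.2)) : ℂ) = 0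
      · simp only [hTp, mul_zero, zero_mul]
      · exact absurd (by have := hTcut _ _ hTp; tauto) hp
    · simp only [hR₁ x _ hx hp₁, zero_mul]

end Expansion

end DoubleResolvent

open DoubleResolvent

theorem double_resolvent_identity_general
    (V : Type*) [DecidableEq V] (G : SimpleGraph V)
    (hdeg : ∀ v : V, {u : V | G.Adj v u}.Finite)
    (H : lp (fun _ : V => ℂ) 2 →L[ℂ] lp (fun _ : V => ℂ) 2)
    (hloc : ∀ x y : V, x ≠ y → ¬ G.Adj x y →
      (inner ℂ (deltaFn V x) (H (deltaFn V y)) : ℂ) = 0)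
    (Ω : Set V) (hΩfin : Ω.Finite)
    (Ωpp : Set V)
    (hΩpp : Ωpp = {v : V | ∃ u ∈ Ω, ∃ p : G.Walk u v, p.length ≤ 2})
    (T T' : lp (fun _ : V => ℂ) 2 →L[ℂ] lp (fun _ : V => ℂ) 2)
    (hT : ∀ x y : V, (inner ℂ (deltaFn V x) (T (deltaFn V y)) : ℂ) =
      if (x ∈ Ω ∧ y ∉ Ω) ∨ (x ∉ Ω ∧ y ∈ Ω)
      then (inner ℂ (deltaFn V x) (H (deltaFn V y)) : ℂ) else 0)
    (hT' : ∀ x y : V, (inner ℂ (deltaFn V x) (T' (deltaFn V y)) : ℂ) =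
      if (x ∈ Ωpp ∧ y ∉ Ωpp) ∨ (x ∉ Ωpp ∧ y ∈ Ωpp)
      then (inner ℂ (deltaFn V x) (H (deltaFn V y)) : ℂ) else 0)
    (z : ℂ)
    (R RΩ RΩpp : lp (fun _ : V => ℂ) 2 →L[ℂ] lp (fun _ : V => ℂ) 2)
    (hR₁ : (H - z • 1) ∘L R = 1) (hR₂ : R ∘L (H - z • 1) = 1)
    (hRΩ₁ : (H - T - z • 1) ∘L RΩ = 1) (hRΩ₂ : RΩ ∘L (H - T - z • 1) = 1)
    (hRΩpp₁ : (H - T' - z • 1) ∘L RΩpp = 1) (hRΩpp₂ : RΩpp ∘L (H - T' - z • 1) = 1)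
    (x w : V) (hx : x ∈ Ω) (hw : w ∉ Ωpp) :
    (inner ℂ (deltaFn V x) (R (deltaFn V w)) : ℂ) =
      ∑' b : {b : V × V // b.1 ∈ Ω ∧ b.2 ∉ Ω ∧ G.Adj b.1 b.2},
        ∑' b' : {b' : V × V // b'.1 ∈ Ωpp ∧ b'.2 ∉ Ωpp ∧ G.Adj b'.1 b'.2},
          (inner ℂ (deltaFn V x) (RΩ (deltaFn V b.val.1)) : ℂ) *
          (inner ℂ (deltaFn V b.val.1) (T (deltaFn V b.val.2)) : ℂ) *
          (inner ℂ (deltaFn V b.val.2) (R (deltaFn V b'.val.1)) : ℂ) *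
          (inner ℂ (deltaFn V b'.val.1) (T' (deltaFn V b'.val.2)) : ℂ) *
          (inner ℂ (deltaFn V b'.val.2) (RΩpp (deltaFn V w)) : ℂ) := by
  have hsub : thicken G Ω ⊆ Ωpp := hΩpp ▸ thicken_subset_setOf_walk one_le_two
  have hΩpp_fin : Ωpp.Finite := hΩpp ▸ (finite_thicken hdeg (finite_thicken hdeg hΩfin)).subset
    fun _ ⟨_, hu, p, hp⟩ => mem_iterate_thicken_of_walk p hp hu
  have hTcut (a b : V) := cut_of_inner_ne_zero (x := a) (y := b) hloc hT
  have hT'cut (a b : V) := cut_of_inner_ne_zero (x := a) (y := b) hloc hT'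
  exact inner_eq_tsum_boundaryBonds
    (finite_support_of_cut hdeg hΩfin hTcut) (finite_support_of_cut hdeg hΩpp_fin hT'cut)
    hTcut hT'cut
    (fun _ _ => inner_inverse_apply_eq_zero_of_block hΩfin
      (fun _ _ => inner_sub_sub_smul_one_eq_zero hT z) hRΩ₁ hRΩ₂)
    (fun _ _ => inner_inverse_apply_eq_zero_of_block hΩpp_fin
      (fun _ _ => inner_sub_sub_smul_one_eq_zero hT' z) hRΩpp₁ hRΩpp₂)
    (resolvent_double_expansion hR₁ hR₂ (by rwa [sub_right_comm] at hRΩ₂)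
      (by rwa [sub_right_comm] at hRΩpp₁))
    hsub hx hw

/-- the 'double resolvent' geometric decoupling identity. Let H be a
bounded self-adjoint operator on ℓ²(V) whose off-diagonal matrix elements live on the
edges of a locally finite graph G, let Ω be finite, Ω⁺⁺ its 2-neighborhood, T (resp.
T') the hopping terms crossing the boundary of Ω (resp. Ω⁺⁺), H_Ω = H − T,
H_{Ω⁺⁺} = H − T'. Then for non-real z, x ∈ Ω and w ∉ Ω⁺⁺,
⟨δ_x,(H−z)⁻¹δ_w⟩ = Σ_{(u,u')∈Θ(Ω)} Σ_{(y,y')∈Θ(Ω⁺⁺)} ⟨δ_x,(H_Ω−z)⁻¹δ_u⟩⟨δ_u,Tδ_{u'}⟩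
⟨δ_{u'},(H−z)⁻¹δ_y⟩⟨δ_y,T'δ_{y'}⟩⟨δ_{y'},(H_{Ω⁺⁺}−z)⁻¹δ_w⟩. -/
theorem double_resolvent_identity
    (V : Type*) [DecidableEq V] (G : SimpleGraph V)
    (hdeg : ∀ v : V, {u : V | G.Adj v u}.Finite)
    (H : lp (fun _ : V => ℂ) 2 →L[ℂ] lp (fun _ : V => ℂ) 2) (hH : IsSelfAdjoint H)
    (hloc : ∀ x y : V, x ≠ y → ¬ G.Adj x y →
      (inner ℂ (deltaFn V x) (H (deltaFn V y)) : ℂ) = 0)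
    (Ω : Set V) (hΩfin : Ω.Finite)
    (Ωpp : Set V)
    (hΩpp : Ωpp = {v : V | ∃ u ∈ Ω, ∃ p : G.Walk u v, p.length ≤ 2})
    (T T' : lp (fun _ : V => ℂ) 2 →L[ℂ] lp (fun _ : V => ℂ) 2)
    (hT : ∀ x y : V, (inner ℂ (deltaFn V x) (T (deltaFn V y)) : ℂ) =
      if (x ∈ Ω ∧ y ∉ Ω) ∨ (x ∉ Ω ∧ y ∈ Ω)
      then (inner ℂ (deltaFn V x) (H (deltaFn V y)) : ℂ) else 0)
    (hT' : ∀ x y : V, (inner ℂ (deltaFn V x) (T' (deltaFn V y)) : ℂ) =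
      if (x ∈ Ωpp ∧ y ∉ Ωpp) ∨ (x ∉ Ωpp ∧ y ∈ Ωpp)
      then (inner ℂ (deltaFn V x) (H (deltaFn V y)) : ℂ) else 0)
    (z : ℂ) (hz : z.im ≠ 0)
    (R RΩ RΩpp : lp (fun _ : V => ℂ) 2 →L[ℂ] lp (fun _ : V => ℂ) 2)
    (hR₁ : (H - z • 1) ∘L R = 1) (hR₂ : R ∘L (H - z • 1) = 1)
    (hRΩ₁ : (H - T - z • 1) ∘L RΩ = 1) (hRΩ₂ : RΩ ∘L (H - T - z • 1) = 1)
    (hRΩpp₁ : (H - T' - z • 1) ∘L RΩpp = 1) (hRΩpp₂ : RΩpp ∘L (H - T' - z • 1) = 1)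
    (x w : V) (hx : x ∈ Ω) (hw : w ∉ Ωpp) :
    (inner ℂ (deltaFn V x) (R (deltaFn V w)) : ℂ) =
      ∑' b : {b : V × V // b.1 ∈ Ω ∧ b.2 ∉ Ω ∧ G.Adj b.1 b.2},
        ∑' b' : {b' : V × V // b'.1 ∈ Ωpp ∧ b'.2 ∉ Ωpp ∧ G.Adj b'.1 b'.2},
          (inner ℂ (deltaFn V x) (RΩ (deltaFn V b.val.1)) : ℂ) *
          (inner ℂ (deltaFn V b.val.1) (T (deltaFn V b.val.2)) : ℂ) *
          (inner ℂ (deltaFn V b.val.2) (R (deltaFn V b'.val.1)) : ℂ) *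
          (inner ℂ (deltaFn V b'.val.1) (T' (deltaFn V b'.val.2)) : ℂ) *
          (inner ℂ (deltaFn V b'.val.2) (RΩpp (deltaFn V w)) : ℂ) :=
  double_resolvent_identity_general V G hdeg H hloc Ω hΩfin Ωpp hΩpp T T' hT hT' z R RΩ RΩpp hR₁ hR₂
    hRΩ₁ hRΩ₂ hRΩpp₁ hRΩpp₂ x w hx hw

end
end
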